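/- Let s be a complex number with 1 < Re(s) < 2. Then ∫_0^∞ t^(1−s) · (Σ_{n=1}^∞ 1/(t + 1/2 + 2n)²) dt = π·(1 − s)·ζ(s, 5/4)/(2^s · sin(πs)), where ζ(s, 5/4) = Σ_{n=0}^∞ (n + 5/4)^(−s) is the Hurwitz zeta function. -/

import Mathlib

open Complex MeasureTheory Set

/-- image -/
lemma img_map : (fun x : ℝ => x / (1 - x)) '' Ioo 0 1 = Ioi 0 := by
  ext y
  constructor
  · rintro ⟨x, ⟨hx0, hx1⟩, rfl⟩
    exact div_pos hx0 (by linarith)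
  · intro hy
    refine ⟨y / (1 + y), ⟨div_pos hy (by linarith [mem_Ioi.mp hy]), ?_⟩, ?_⟩
    · rw [div_lt_one (by linarith [mem_Ioi.mp hy])]; linarith [mem_Ioi.mp hy]
    · have h1 : (0:ℝ) < 1 + y := by linarith [mem_Ioi.mp hy]
      field_simp
      ring

lemma inj_map : InjOn (fun x : ℝ => x / (1 - x)) (Ioo 0 1) := by
  intro x hx y hy h
  simp only at h
  rw [div_eq_div_iff (by linarith [hx.2]) (by linarith [hy.2])] at h
  nlinarith

lemma deriv_map {x : ℝ} (hx : x ∈ Ioo 0 1) :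
    HasDerivWithinAt (fun x : ℝ => x / (1 - x)) (1 / (1 - x) ^ 2) (Ioo 0 1) x := by
  have h : HasDerivAt (fun x : ℝ => x / (1 - x))
      ((1 * (1 - x) - x * (0 - 1)) / (1 - x) ^ 2) x :=
    (hasDerivAt_id x).div ((hasDerivAt_const x 1).sub (hasDerivAt_id x)) (by nlinarith [hx.2])
  have : (1 * (1 - x) - x * (0 - 1)) / (1 - x) ^ 2 = 1 / (1 - x) ^ 2 := by ring
  exact (this ▸ h).hasDerivWithinAt

lemma key_eq (s : ℂ) {x : ℝ} (hx : x ∈ Ioo 0 1) :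
    |1 / (1 - x) ^ 2| •
      ((((x / (1 - x) : ℝ) : ℂ)) ^ (1 - s) * (1 / ((((x / (1 - x) : ℝ)) : ℂ) + 1) ^ 2))
      = (x : ℂ) ^ ((2 - s) - 1) * (1 - (x : ℂ)) ^ (s - 1) := by
  obtain ⟨hx0, hx1⟩ := hx
  have h1x : (0:ℝ) < 1 - x := by linarith
  have hnec : (1 : ℂ) - (x : ℂ) ≠ 0 := by
    rw [sub_ne_zero]
    intro h
    have : x = 1 := by exact_mod_cast h.symm
    linarith
  have hd : ((x / (1 - x) : ℝ) : ℂ) + 1 = (((1 - x)⁻¹ : ℝ) : ℂ) := by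
    push_cast
    field_simp
    ring
  have hpow : (((x / (1 - x) : ℝ)) : ℂ) ^ (1 - s)
      = (x : ℂ) ^ (1 - s) * ((1 - x : ℝ) : ℂ) ^ (s - 1) := by
    rw [div_eq_mul_inv, ofReal_mul, mul_cpow_ofReal_nonneg hx0.le (by positivity)]
    congr 1
    rw [ofReal_inv, inv_cpow _ _ (by
      rw [Complex.arg_ofReal_of_nonneg h1x.le]
      exact Real.pi_ne_zero.symm ), ← cpow_neg]
    ring_nf
  have h2 : ((2 : ℂ) - s) - 1 = 1 - s := by ring
  rw [abs_of_pos (by positivity), hd, hpow, real_smul, h2]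
  push_cast
  field_simp

lemma beta_Ioi (s : ℂ) (hs1 : 1 < s.re) (hs2 : s.re < 2) :
    (∫ t in Ioi (0:ℝ), (t:ℂ) ^ (1 - s) * (1 / ((t:ℂ) + 1) ^ 2))
        = Complex.Gamma (2 - s) * Complex.Gamma s ∧
      IntegrableOn (fun t : ℝ => (t:ℂ) ^ (1 - s) * (1 / ((t:ℂ) + 1) ^ 2)) (Ioi 0) := by
  have h2s : 0 < (2 - s).re := by
    rw [sub_re]; norm_num; linarith
  have hss : 0 < s.re := by linarith
  have hbeta_ii := Complex.betaIntegral_convergent h2s hss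
  have hbeta_int : IntegrableOn
      (fun x : ℝ => (x:ℂ) ^ ((2 - s) - 1) * (1 - (x:ℂ)) ^ (s - 1)) (Ioo (0:ℝ) 1) := by
    have := (intervalIntegrable_iff_integrableOn_Ioc_of_le (by norm_num : (0:ℝ) ≤ 1)).mp hbeta_ii
    exact this.mono_set Ioo_subset_Ioc_self
  set G : ℝ → ℂ := fun t => (t:ℂ) ^ (1 - s) * (1 / ((t:ℂ) + 1) ^ 2) with hG
  have hval := integral_image_eq_integral_abs_deriv_smul measurableSet_Ioo
    (fun x hx => deriv_map hx) inj_map G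
  rw [img_map] at hval
  have hcongr : ∀ x ∈ Ioo (0:ℝ) 1,
      |1 / (1 - x) ^ 2| • G (x / (1 - x))
        = (x:ℂ) ^ ((2 - s) - 1) * (1 - (x:ℂ)) ^ (s - 1) := fun x hx => key_eq s hx
  constructor
  · rw [hval, setIntegral_congr_fun measurableSet_Ioo hcongr]
    rw [Complex.Gamma_mul_Gamma_eq_betaIntegral h2s hss]
    have h2 : 2 - s + s = 2 := by ring
    have hg2 : Complex.Gamma 2 = 1 := by
      rw [(by norm_num : (2:ℂ) = 1 + 1), Complex.Gamma_add_one _ one_ne_zero,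
        Complex.Gamma_one, mul_one]
    rw [h2, hg2, one_mul, Complex.betaIntegral,
      intervalIntegral.integral_of_le (by norm_num : (0:ℝ) ≤ 1),
      MeasureTheory.integral_Ioc_eq_integral_Ioo]
  · have hiff := integrableOn_image_iff_integrableOn_abs_deriv_smul measurableSet_Ioo
      (fun x hx => deriv_map hx) inj_map G
    rw [img_map] at hiff
    exact hiff.mpr (hbeta_int.congr_fun (fun x hx => (hcongr x hx).symm) measurableSet_Ioo)

lemma scaled (s : ℂ) (hs1 : 1 < s.re) (hs2 : s.re < 2) {c : ℝ} (hc : 0 < c) :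
    (∫ t in Ioi (0:ℝ), (t:ℂ) ^ (1 - s) * (1 / ((t:ℂ) + c) ^ 2))
        = (c:ℂ) ^ (-s) * (Complex.Gamma (2 - s) * Complex.Gamma s) ∧
      IntegrableOn (fun t : ℝ => (t:ℂ) ^ (1 - s) * (1 / ((t:ℂ) + c) ^ 2)) (Ioi 0) := by
  obtain ⟨hval1, hint1⟩ := beta_Ioi s hs1 hs2
  have hcne : (c:ℂ) ≠ 0 := ofReal_ne_zero.mpr hc.ne'
  set G : ℝ → ℂ := fun t => (t:ℂ) ^ (1 - s) * (1 / ((t:ℂ) + c) ^ 2) with hGdef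
  have himg : (fun u : ℝ => c * u) '' Ioi 0 = Ioi (0:ℝ) := by
    ext y; constructor
    · rintro ⟨u, hu, rfl⟩; exact mul_pos hc hu
    · intro hy; exact ⟨y / c, div_pos hy hc, by field_simp⟩
  have hder : ∀ u ∈ Ioi (0:ℝ), HasDerivWithinAt (fun u : ℝ => c * u) c (Ioi 0) u :=
    fun u _ => ((hasDerivAt_id u).const_mul c).hasDerivWithinAt.congr_deriv (mul_one c)
  have hinj : InjOn (fun u : ℝ => c * u) (Ioi 0) :=
    fun u _ v _ h => mul_left_cancel₀ hc.ne' h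
  have hcongr : ∀ u ∈ Ioi (0:ℝ),
      |c| • G (c * u) = (c:ℂ) ^ (-s) * ((u:ℂ) ^ (1 - s) * (1 / ((u:ℂ) + 1) ^ 2)) := by
    intro u hu
    have hu0 : (0:ℝ) < u := hu
    have hp : ((c * u : ℝ) : ℂ) ^ (1 - s) = (c:ℂ) ^ (1 - s) * (u:ℂ) ^ (1 - s) := by
      rw [ofReal_mul]; exact mul_cpow_ofReal_nonneg hc.le hu0.le _
    have hcp : (c:ℂ) ^ (1 - s) = (c:ℂ) * (c:ℂ) ^ (-s) := by
      rw [(by ring : (1:ℂ) - s = 1 + -s), cpow_add _ _ hcne, cpow_one]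
    have hd : (((c * u : ℝ)) : ℂ) + c = (c:ℂ) * ((u:ℂ) + 1) := by push_cast; ring
    have hune : ((u:ℂ) + 1) ≠ 0 := by
      intro h
      have : (u:ℝ) + 1 = 0 := by exact_mod_cast h
      linarith
    rw [abs_of_pos hc, real_smul, hGdef]
    simp only
    rw [hp, hcp, hd, mul_pow]
    have hc2 : (c:ℂ) ^ 2 ≠ 0 := pow_ne_zero _ hcne
    field_simp
  have hval := integral_image_eq_integral_abs_deriv_smul measurableSet_Ioi hder hinj G
  rw [himg] at hval
  have hiff := integrableOn_image_iff_integrableOn_abs_deriv_smul measurableSet_Ioi hder hinj G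
  rw [himg] at hiff
  constructor
  · rw [hval, setIntegral_congr_fun measurableSet_Ioi hcongr, integral_const_mul, hval1]
  · refine hiff.mpr ?_
    exact MeasureTheory.IntegrableOn.congr_fun (hint1.const_mul ((c:ℂ) ^ (-s)))
      (fun u hu => (hcongr u hu).symm) measurableSet_Ioi

lemma norm_int_le (s : ℂ) (hs1 : 1 < s.re) (hs2 : s.re < 2) {c : ℝ} (hc : 0 < c) :
    (∫ t in Ioi (0:ℝ), ‖(t:ℂ) ^ (1 - s) * (1 / ((t:ℂ) + c) ^ 2)‖)
      ≤ c ^ (-s.re) *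
        ‖Complex.Gamma (2 - (s.re:ℂ)) * Complex.Gamma ((s.re:ℂ))‖ := by
  set σ := s.re with hσ
  have hσ1 : 1 < ((σ:ℂ)).re := by rwa [ofReal_re]
  have hσ2 : ((σ:ℂ)).re < 2 := by rwa [ofReal_re]
  obtain ⟨hval, -⟩ := scaled (σ:ℂ) hσ1 hσ2 hc
  set h : ℝ → ℝ := fun t => t ^ (1 - σ) * (1 / (t + c) ^ 2) with hh
  have hnorm : ∀ t ∈ Ioi (0:ℝ),
      ‖(t:ℂ) ^ (1 - s) * (1 / ((t:ℂ) + c) ^ 2)‖ = h t := by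
    intro t ht
    have ht0 : (0:ℝ) < t := ht
    have htc : (t:ℂ) + c = ((t + c : ℝ) : ℂ) := by push_cast; ring
    rw [norm_mul,
      Complex.norm_cpow_eq_rpow_re_of_pos ht0, htc]
    simp only [norm_div, norm_one, norm_pow, Complex.norm_real, Real.norm_eq_abs, sub_re, one_re,
      abs_of_pos (by linarith : (0:ℝ) < t + c), hh, ← hσ]
  have hcast : ∀ t ∈ Ioi (0:ℝ),
      ((h t : ℝ) : ℂ) = (t:ℂ) ^ (1 - (σ:ℂ)) * (1 / ((t:ℂ) + c) ^ 2) := by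
    intro t ht
    have ht0 : (0:ℝ) < t := ht
    rw [hh]
    simp only
    rw [ofReal_mul, Complex.ofReal_cpow ht0.le]
    push_cast
    ring
  have hofreal : ((∫ t in Ioi (0:ℝ), h t : ℝ) : ℂ)
      = ((c:ℂ)) ^ (-(σ:ℂ)) * (Complex.Gamma (2 - (σ:ℂ)) * Complex.Gamma ((σ:ℂ))) := by
    have hcoe : ∀ r : ℝ, Complex.ofReal r = @RCLike.ofReal ℂ _ r := fun r => rfl
    rw [hcoe, ← _root_.integral_ofReal, ← hval]
    refine setIntegral_congr_fun measurableSet_Ioi ?_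
    intro t ht
    exact hcast t ht
  calc (∫ t in Ioi (0:ℝ), ‖(t:ℂ) ^ (1 - s) * (1 / ((t:ℂ) + c) ^ 2)‖)
      = ∫ t in Ioi (0:ℝ), h t := setIntegral_congr_fun measurableSet_Ioi hnorm
    _ = (((c:ℂ)) ^ (-(σ:ℂ)) * (Complex.Gamma (2 - (σ:ℂ)) * Complex.Gamma ((σ:ℂ)))).re := by
        rw [← hofreal, ofReal_re]
    _ ≤ ‖((c:ℂ)) ^ (-(σ:ℂ)) * (Complex.Gamma (2 - (σ:ℂ)) * Complex.Gamma ((σ:ℂ)))‖ :=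
        Complex.re_le_norm _
    _ = c ^ (-σ) * ‖Complex.Gamma (2 - (σ:ℂ)) * Complex.Gamma ((σ:ℂ))‖ := by
        rw [norm_mul, Complex.norm_cpow_eq_rpow_re_of_pos hc]
        simp
theorem integral_J_term (s : ℂ) (hs1 : 1 < s.re) (hs2 : s.re < 2) :
    ∫ t in Ioi (0 : ℝ), (t : ℂ) ^ (1 - s) * ∑' n : ℕ+, 1 / ((t : ℂ) + 1 / 2 + 2 * (n : ℕ)) ^ 2
      = (Real.pi : ℂ) * (1 - s) * (∑' n : ℕ, ((n : ℂ) + 5 / 4) ^ (-s)) /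
          ((2 : ℂ) ^ s * Complex.sin ((Real.pi : ℂ) * s)) := by
  set σ := s.re with hσ
  set c : ℕ+ → ℝ := fun n => 1 / 2 + 2 * (n : ℕ) with hcdef
  have hc : ∀ n : ℕ+, 0 < c n := fun n => by positivity
  set F : ℕ+ → ℝ → ℂ := fun n t => (t:ℂ) ^ (1 - s) * (1 / ((t:ℂ) + (c n : ℝ)) ^ 2) with hF
  set K : ℂ := Complex.Gamma (2 - s) * Complex.Gamma s with hK
  set A : ℝ := ‖Complex.Gamma (2 - (σ:ℂ)) * Complex.Gamma ((σ:ℂ))‖ with hA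
  -- step 1 : rewrite integrand as a tsum of F
  have step1 : ∀ t : ℝ, (t : ℂ) ^ (1 - s) * ∑' n : ℕ+, 1 / ((t : ℂ) + 1 / 2 + 2 * (n : ℕ)) ^ 2
      = ∑' n : ℕ+, F n t := by
    intro t
    rw [← tsum_mul_left]
    refine tsum_congr fun n => ?_
    rw [hF, hcdef]
    push_cast
    ring_nf
  -- summability of norm integrals
  have hsum : Summable fun n : ℕ+ => ∫ t in Ioi (0:ℝ), ‖F n t‖ := by
    have hbound : ∀ n : ℕ+, (∫ t in Ioi (0:ℝ), ‖F n t‖) ≤ (c n) ^ (-σ) * A :=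
      fun n => norm_int_le s hs1 hs2 (hc n)
    have hBsum : Summable fun n : ℕ+ => (c n) ^ (-σ) * A := by
      rw [← Equiv.summable_iff (Equiv.pnatEquivNat.symm)]
      have h1 : Summable fun m : ℕ => ((m:ℝ) + 1) ^ (-σ) * A := by
        refine Summable.mul_right A ?_
        have := (summable_nat_add_iff 1).mpr (Real.summable_nat_rpow.mpr (by linarith : -σ < -1))
        refine this.congr fun m => ?_
        push_cast
        norm_num
      refine h1.of_nonneg_of_le (fun m => mul_nonneg (Real.rpow_nonneg (hc _).le _) (norm_nonneg _)) fun m => ?_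
      have h2 : ((m:ℝ) + 1) ≤ c (Equiv.pnatEquivNat.symm m) := by
        simp only [hcdef, Equiv.pnatEquivNat_symm_apply, Nat.succPNat_coe]
        push_cast
        linarith
      exact mul_le_mul_of_nonneg_right
        (Real.rpow_le_rpow_of_nonpos (by positivity) h2 (by linarith)) (norm_nonneg _)
    exact hBsum.of_nonneg_of_le
      (fun n => integral_nonneg fun t => norm_nonneg _) hbound
  -- swap sum and integral
  rw [setIntegral_congr_fun measurableSet_Ioi (fun t _ => step1 t),
    ← integral_tsum_of_summable_integral_norm (fun n => (scaled s hs1 hs2 (hc n)).2) hsum]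
  -- evaluate each integral
  have step3 : ∀ n : ℕ+, (∫ t in Ioi (0:ℝ), F n t)
      = ((2:ℂ) ^ (-s) * K) * (((n:ℕ) : ℂ) + 1 / 4) ^ (-s) := by
    intro n
    rw [(scaled s hs1 hs2 (hc n)).1]
    have hsplit : ((c n : ℝ) : ℂ) ^ (-s)
        = (2:ℂ) ^ (-s) * ((((n:ℕ):ℝ) + 1/4 : ℝ) : ℂ) ^ (-s) := by
      have : (c n : ℝ) = 2 * (((n:ℕ):ℝ) + 1/4) := by rw [hcdef]; ring
      rw [this, ofReal_mul, mul_cpow_ofReal_nonneg (by norm_num) (by positivity)]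
      norm_num
    rw [hsplit]
    have : ((((n:ℕ):ℝ) + 1/4 : ℝ) : ℂ) = (((n:ℕ):ℂ) + 1/4) := by push_cast; ring
    rw [this]
    ring
  rw [tsum_congr step3, tsum_mul_left]
  -- reindex the sum
  have step5 : (∑' n : ℕ+, (((n:ℕ) : ℂ) + 1 / 4) ^ (-s)) = ∑' n : ℕ, ((n : ℂ) + 5/4) ^ (-s) := by
    rw [← Equiv.tsum_eq (Equiv.pnatEquivNat.symm) (fun n : ℕ+ => (((n:ℕ) : ℂ) + 1 / 4) ^ (-s))]
    refine tsum_congr fun m => ?_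
    congr 1
    simp only [Equiv.pnatEquivNat_symm_apply, Nat.succPNat_coe]
    push_cast
    ring
  rw [step5]
  -- final algebra
  have hKval : K = (1 - s) * ((Real.pi : ℂ) / Complex.sin ((Real.pi : ℂ) * s)) := by
    have h1s : (1:ℂ) - s ≠ 0 := by
      intro h
      have := congrArg Complex.re h
      simp only [sub_re, one_re, zero_re] at this
      linarith
    have h2 : (2:ℂ) - s = (1 - s) + 1 := by ring
    rw [hK, h2, Complex.Gamma_add_one _ h1s, mul_assoc, mul_comm (Complex.Gamma (1-s)),
      Complex.Gamma_mul_Gamma_one_sub s]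
  rw [hKval, cpow_neg]
  ring
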